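/- Let R be a complete and quasi-transitive relation on a finite set V with |V| ≥ 2, and let N_R be the network on V with capacity c_R(x,y) = 1 if (x,y) is in the strict part S(R) and c_R(x,y) = 0 otherwise. Then the flow relation of N_R equals R: 𝔉(N_R) = R. -/

import Mathlib

/-- A flow from `s` to `t` in the network with capacity `c`: bounded by the
capacity on every arc and conserving flow at every vertex other than `s`, `t`. -/
def IsFlow {V : Type*} [Fintype V] [DecidableEq V]
    (c : V → V → ℕ) (s t : V) (f : V → V → ℕ) : Prop :=
  (∀ x y : V, x ≠ y → f x y ≤ c x y) ∧
  ∀ x : V, x ≠ s → x ≠ t →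
    ∑ y ∈ Finset.univ.erase x, f x y = ∑ y ∈ Finset.univ.erase x, f y x

/-- The value of a flow `f` from `s`: outflow of `s` minus inflow of `s`. -/
def flowValue {V : Type*} [Fintype V] [DecidableEq V]
    (f : V → V → ℕ) (s : V) : ℤ :=
  (∑ y ∈ Finset.univ.erase s, (f s y : ℤ)) -
    ∑ y ∈ Finset.univ.erase s, (f y s : ℤ)

/-- The maximum flow value `φ_{st}` from `s` to `t` in the network `c`. -/
noncomputable def maxFlow {V : Type*} [Fintype V] [DecidableEq V]
    (c : V → V → ℕ) (s t : V) : ℕ :=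
  sSup {n : ℕ | ∃ f : V → V → ℕ, IsFlow c s t f ∧ flowValue f s = (n : ℤ)}

/-- The flow relation `𝔉(N)`: `x ⪰ y` iff `x = y` or `x ≠ y` and `φ_{xy} ≥ φ_{yx}`. -/
def FlowRel {V : Type*} [Fintype V] [DecidableEq V]
    (c : V → V → ℕ) (x y : V) : Prop :=
  x = y ∨ (x ≠ y ∧ maxFlow c y x ≤ maxFlow c x y)

/-- A relation is complete if any two elements are comparable. -/
def CompleteRel {V : Type*} (R : V → V → Prop) : Prop :=
  ∀ x y : V, R x y ∨ R y x

/-- The strict part `S(R)` of a relation `R`. -/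
def StrictPart {V : Type*} (R : V → V → Prop) (x y : V) : Prop :=
  R x y ∧ ¬ R y x

/-- A relation is quasi-transitive if its strict part is transitive. -/
def QuasiTransitive {V : Type*} (R : V → V → Prop) : Prop :=
  Transitive (StrictPart R)

/-- The outdegree of `x` in the network `c`. -/
def outdeg {V : Type*} [Fintype V] [DecidableEq V] (c : V → V → ℕ) (x : V) : ℕ :=
  ∑ y ∈ Finset.univ.erase x, c x y

/-- The indegree of `x` in the network `c`. -/
def indeg {V : Type*} [Fintype V] [DecidableEq V] (c : V → V → ℕ) (x : V) : ℕ :=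
  ∑ y ∈ Finset.univ.erase x, c y x

/-!
A unit of capacity sits exactly on the arcs of `S(R)`, and quasi-transitivity makes the
reachability relation of this network equal to `S(R)` itself (plus equality). So for `x ≠ y`
either `S(R) x y`, and the arc `x → y` alone carries a flow of value `1`, or `y` is not
reachable from `x`, and the cut formed by the vertices reachable from `x` has capacity `0`,
forcing `φ_{xy} = 0`. Completeness of `R` then turns the comparison of `φ_{xy}` and `φ_{yx}`
into `R x y`.
-/

section Flows

open Finset

variable {V : Type*} [Fintype V] [DecidableEq V]

lemma sum_sub_eq_flowValue (f : V → V → ℕ) (v : V) :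
    ∑ w, ((f v w : ℤ) - f w v) = flowValue f v := by
  rw [← sum_erase univ (a := v) (by simp), sum_sub_distrib, flowValue]

lemma IsFlow.flowValue_le_outdeg {c f : V → V → ℕ} {s t : V} (hf : IsFlow c s t f) :
    flowValue f s ≤ outdeg c s := by
  have hout : ∑ y ∈ univ.erase s, (f s y : ℤ) ≤ ∑ y ∈ univ.erase s, (c s y : ℤ) :=
    sum_le_sum fun y hy => by exact_mod_cast hf.1 s y (ne_of_mem_erase hy).symm
  have hin : 0 ≤ ∑ y ∈ univ.erase s, (f y s : ℤ) := sum_nonneg fun _ _ => by positivity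
  rw [flowValue, outdeg]
  push_cast
  linarith

lemma IsFlow.flowValue_le_cut {c f : V → V → ℕ} {s t : V} (hf : IsFlow c s t f)
    {T : Finset V} (hs : s ∈ T) (ht : t ∉ T) :
    flowValue f s ≤ ∑ v ∈ T, ∑ w ∈ Tᶜ, (c v w : ℤ) := by
  have hconserve : ∀ v ∈ T, v ≠ s → ∑ w, ((f v w : ℤ) - f w v) = 0 := by
    intro v hv hvs
    rw [sum_sub_eq_flowValue, flowValue, sub_eq_zero]
    exact_mod_cast hf.2 v hvs (ne_of_mem_of_not_mem hv ht)
  have hinside : ∑ v ∈ T, ∑ w ∈ T, ((f v w : ℤ) - f w v) = 0 := by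
    simp only [sum_sub_distrib]
    rw [sub_eq_zero, sum_comm]
  calc flowValue f s = ∑ v ∈ T, ∑ w, ((f v w : ℤ) - f w v) := by
        rw [sum_eq_single_of_mem s hs hconserve, sum_sub_eq_flowValue]
    _ = ∑ v ∈ T, ∑ w ∈ Tᶜ, ((f v w : ℤ) - f w v) := by
        simp only [← sum_add_sum_compl T]
        rw [sum_add_distrib, hinside, zero_add]
    _ ≤ ∑ v ∈ T, ∑ w ∈ Tᶜ, (c v w : ℤ) := by
        refine sum_le_sum fun v hv => sum_le_sum fun w hw => ?_
        have hvw : v ≠ w := ne_of_mem_of_not_mem hv (mem_compl.1 hw)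
        have := hf.1 v w hvw
        omega

lemma maxFlow_bddAbove (c : V → V → ℕ) (s t : V) :
    BddAbove {n : ℕ | ∃ f, IsFlow c s t f ∧ flowValue f s = n} :=
  ⟨outdeg c s, by rintro n ⟨f, hf, hn⟩; exact_mod_cast hn ▸ hf.flowValue_le_outdeg⟩

lemma IsFlow.le_maxFlow {c f : V → V → ℕ} {s t : V} (hf : IsFlow c s t f) {n : ℕ}
    (hn : flowValue f s = n) : n ≤ maxFlow c s t :=
  le_csSup (maxFlow_bddAbove c s t) ⟨f, hf, hn⟩

lemma le_maxFlow_of_ne (c : V → V → ℕ) {s t : V} (hst : s ≠ t) : c s t ≤ maxFlow c s t := by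
  refine IsFlow.le_maxFlow (f := fun u v => if u = s ∧ v = t then c s t else 0)
    ⟨fun u v _ => ?_, fun v hvs hvt => ?_⟩ ?_
  · dsimp only
    split_ifs with h
    · rw [h.1, h.2]
    · exact Nat.zero_le _
  · rw [sum_eq_zero fun w _ => by simp [hvs], sum_eq_zero fun w _ => by simp [hvt]]
  · rw [flowValue, sum_eq_single_of_mem t (by simp [hst.symm]) fun w _ hwt => by simp [hwt],
      sum_eq_zero fun w _ => by simp [hst]]
    simp

lemma maxFlow_eq_zero_of_not_reflTransGen {c : V → V → ℕ} {s t : V}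
    (h : ¬ Relation.ReflTransGen (fun u v => 0 < c u v) s t) : maxFlow c s t = 0 := by
  classical
  let T := univ.filter (Relation.ReflTransGen (fun u v => 0 < c u v) s)
  have hs : s ∈ T := by simp [T, Relation.ReflTransGen.refl]
  have ht : t ∉ T := by simp [T, h]
  have hcut : ∑ v ∈ T, ∑ w ∈ Tᶜ, (c v w : ℤ) = 0 := by
    refine sum_eq_zero fun v hv => sum_eq_zero fun w hw => ?_
    simp only [T, mem_compl, mem_filter, mem_univ, true_and] at hv hw
    exact_mod_cast Nat.eq_zero_of_not_pos fun hvw => hw (hv.tail hvw)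
  refine Nat.eq_zero_of_le_zero (csSup_le' ?_)
  rintro n ⟨f, hf, hn⟩
  have := hf.flowValue_le_cut hs ht
  omega

end Flows

lemma QuasiTransitive.reflTransGen_strictPart_iff {V : Type*} {R : V → V → Prop}
    (hq : QuasiTransitive R) {x y : V} :
    Relation.ReflTransGen (StrictPart R) x y ↔ y = x ∨ StrictPart R x y := by
  have : IsTrans V (StrictPart R) := ⟨fun _ _ _ hab hbc => hq hab hbc⟩
  rw [Relation.reflTransGen_iff_eq_or_transGen, Relation.transGen_eq_self]

section StrictPartNetwork

variable {V : Type*} [Fintype V] [DecidableEq V] {R : V → V → Prop} {c : V → V → ℕ}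

lemma maxFlow_eq_zero_of_not_strictPart (hq : QuasiTransitive R)
    (hsupp : ∀ u v, 0 < c u v ↔ StrictPart R u v) {x y : V} (hxy : x ≠ y)
    (hS : ¬ StrictPart R x y) : maxFlow c x y = 0 := by
  refine maxFlow_eq_zero_of_not_reflTransGen fun hpath => ?_
  have hpath' : Relation.ReflTransGen (StrictPart R) x y := by
    simpa only [hsupp] using hpath
  rcases hq.reflTransGen_strictPart_iff.1 hpath' with rfl | hS'
  exacts [hxy rfl, hS hS']

lemma maxFlow_pos_of_strictPart (hsupp : ∀ u v, 0 < c u v ↔ StrictPart R u v) {x y : V}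
    (hS : StrictPart R x y) : 0 < maxFlow c x y :=
  have hxy : x ≠ y := by rintro rfl; exact hS.2 hS.1
  ((hsupp x y).2 hS).trans_le (le_maxFlow_of_ne c hxy)

theorem flowRel_iff_of_pos_iff_strictPart (hc : CompleteRel R) (hq : QuasiTransitive R)
    (hsupp : ∀ u v, 0 < c u v ↔ StrictPart R u v) (x y : V) : FlowRel c x y ↔ R x y := by
  rcases eq_or_ne x y with rfl | hxy
  · simpa [FlowRel] using hc x x
  simp only [FlowRel, hxy, false_or, true_and, ne_eq, not_false_eq_true]
  constructor
  · intro hle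
    by_contra hR
    have hyx : 0 < maxFlow c y x :=
      maxFlow_pos_of_strictPart hsupp ⟨(hc x y).resolve_left hR, hR⟩
    have := maxFlow_eq_zero_of_not_strictPart hq hsupp hxy fun hS => hR hS.1
    omega
  · intro hR
    rw [maxFlow_eq_zero_of_not_strictPart hq hsupp (Ne.symm hxy) fun hS => hS.2 hR]
    exact Nat.zero_le _

end StrictPartNetwork

theorem stmt5_general {V : Type*} [Fintype V] [DecidableEq V]
    (R : V → V → Prop) [DecidableRel R]
    (hc : CompleteRel R) (hq : QuasiTransitive R) :
    ∀ x y : V,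
      FlowRel (fun u v => if R u v ∧ ¬ R v u then 1 else 0) x y ↔ R x y :=
  flowRel_iff_of_pos_iff_strictPart hc hq fun u v => by
    unfold StrictPart
    split_ifs with h <;> simp [h]

/-- For a complete and quasi-transitive relation `R`, the flow relation of the
network `N_R` equals `R`. -/
theorem stmt5 {V : Type*} [Fintype V] [DecidableEq V]
    (hV : 2 ≤ Fintype.card V) (R : V → V → Prop) [DecidableRel R]
    (hc : CompleteRel R) (hq : QuasiTransitive R) :
    ∀ x y : V,
      FlowRel (fun u v => if R u v ∧ ¬ R v u then 1 else 0) x y ↔ R x y :=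
  stmt5_general R hc hq
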